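/- arXiv:2510.04736 — 2 statements merged into one kernel-verified Lean document; each statement's English description precedes it below -/
import Mathlib

section
/- Let E be a real inner product space, W ⊆ E a nonempty set with ‖u − v‖ ≤ D for all u, v ∈ W where D > 0, and P : E → E a map with P(x) ∈ W for all x and ‖P(x) − y‖ ≤ ‖x − y‖ for all x ∈ E and y ∈ W. Let f : E → ℝ, T ≥ 1 a natural number, ε ≥ 0 and G ≥ 0 with G + ε > 0, and set η = D/((G + ε)·√T). Let (w_t), (g_t), (e_t) satisfy w_0 ∈ W and w_{t+1} = P(w_t − η • (g_t + e_t)) for all t < T, where for each t < T: f(y) ≥ f(w_t) + ⟪g_t, y − w_t⟫ for all y ∈ W, ‖g_t‖ ≤ G, and ‖e_t‖ ≤ ε. Then for every w⋆ ∈ W, min_{t < T} (f(w_t) − f(w⋆)) ≤ D(G + ε)/√T + ε·D. -/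
open scoped RealInnerProductSpace

/-!
The squared distance `‖w_t - w⋆‖²` to a comparison point is a potential: the projection step
decreases it by `2η ⟪g_t + e_t, w_t - w⋆⟫` up to `η²(G + ε)²`, the subgradient inequality bounds
`f(w_t) - f(w⋆)` by `⟪g_t, w_t - w⋆⟫`, and the error term costs at most `ε D`. Summing over
`t < T` telescopes the potential to at most `D²`, so the best iterate is within
`D²/(2ηT) + η(G + ε)²/2 + εD` of `f(w⋆)`, and the chosen `η` balances the first two terms.
-/

open Finset

theorem inf'_range_le_div_add_of_le_sub_succ {a c : ℕ → ℝ} {C : ℝ} {T : ℕ}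
    (hT : (range T).Nonempty) (h : ∀ t < T, c t ≤ a t - a (t + 1) + C) (haT : 0 ≤ a T) :
    (range T).inf' hT c ≤ a 0 / T + C := by
  have hTpos : (0 : ℝ) < T := by exact_mod_cast nonempty_range_iff.mp hT |> Nat.pos_of_ne_zero
  have hsum : T * (range T).inf' hT c ≤ a 0 - a T + T * C :=
    calc T * (range T).inf' hT c = #(range T) • (range T).inf' hT c := by
          rw [card_range, nsmul_eq_mul]
      _ ≤ ∑ t ∈ range T, c t := card_nsmul_le_sum _ _ _ fun t ht => inf'_le _ ht
      _ ≤ ∑ t ∈ range T, (a t - a (t + 1) + C) := sum_le_sum fun t ht => h t (mem_range.mp ht)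
      _ = a 0 - a T + T * C := by
          rw [sum_add_distrib, sum_range_sub', sum_const, card_range, nsmul_eq_mul]
  rw [div_add' _ _ _ hTpos.ne', le_div_iff₀ hTpos]
  linarith

section ProjectedStep

variable {E : Type*} [NormedAddCommGroup E] [InnerProductSpace ℝ E]

theorem norm_sub_smul_sub_sq (x y v : E) (η : ℝ) :
    ‖x - η • v - y‖ ^ 2 = ‖x - y‖ ^ 2 - 2 * η * ⟪v, x - y⟫ + η ^ 2 * ‖v‖ ^ 2 := by
  rw [sub_right_comm, norm_sub_sq_real, real_inner_smul_right, norm_smul, real_inner_comm,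
    mul_pow, Real.norm_eq_abs, sq_abs]
  ring

theorem sub_le_inner_of_subgradient {f : E → ℝ} {x y g : E} (hsub : f y ≥ f x + ⟪g, y - x⟫) :
    f x - f y ≤ ⟪g, x - y⟫ := by
  rw [← neg_sub y x, inner_neg_right]
  linarith

theorem sub_le_of_projected_subgradient_step {W : Set E} {P : E → E}
    (hP : ∀ x : E, ∀ y ∈ W, ‖P x - y‖ ≤ ‖x - y‖) {f : E → ℝ} {x y g e : E} {η G ε D : ℝ}
    (hη : 0 < η) (hy : y ∈ W) (hsub : f y ≥ f x + ⟪g, y - x⟫) (hg : ‖g‖ ≤ G) (he : ‖e‖ ≤ ε)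
    (hxy : ‖x - y‖ ≤ D) :
    f x - f y ≤ ‖x - y‖ ^ 2 / (2 * η) - ‖P (x - η • (g + e)) - y‖ ^ 2 / (2 * η)
      + (η * (G + ε) ^ 2 / 2 + ε * D) := by
  have hproj : ‖P (x - η • (g + e)) - y‖ ^ 2
      ≤ ‖x - y‖ ^ 2 - 2 * η * ⟪g + e, x - y⟫ + η ^ 2 * ‖g + e‖ ^ 2 := by
    rw [← norm_sub_smul_sub_sq]
    gcongr
    exact hP _ y hy
  have hgap : f x - f y - ε * D ≤ ⟪g + e, x - y⟫ := by
    have herr : -⟪e, x - y⟫ ≤ ε * D :=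
      calc -⟪e, x - y⟫ = ⟪-e, x - y⟫ := (inner_neg_left e (x - y)).symm
        _ ≤ ‖e‖ * ‖x - y‖ := norm_neg e ▸ real_inner_le_norm (-e) (x - y)
        _ ≤ ε * D := mul_le_mul he hxy (norm_nonneg _) ((norm_nonneg _).trans he)
    rw [inner_add_left]
    linarith [sub_le_inner_of_subgradient hsub]
  have hdir : ‖g + e‖ ^ 2 ≤ (G + ε) ^ 2 := by
    gcongr
    exact (norm_add_le g e).trans (add_le_add hg he)
  rw [← sub_div, ← sub_le_iff_le_add, le_div_iff₀ (by positivity)]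
  linarith [mul_le_mul_of_nonneg_left hgap (by positivity : (0 : ℝ) ≤ 2 * η),
    mul_le_mul_of_nonneg_left hdir (sq_nonneg η)]

end ProjectedStep

/-- Convergence rate of Proposition 3: with feasible set `W` of diameter at
most `D > 0`, projection `P` nonexpansive toward points of `W`, subgradients
bounded by `G`, oracle errors bounded by `ε` (with `G + ε > 0`), and the step
size `η = D/((G + ε)√T)`, projected subgradient descent satisfies
`min_{t<T} (f(w_t) − f(w⋆)) ≤ D(G + ε)/√T + ε·D`. -/
theorem projected_subgradient_descent_rate
    {E : Type*} [NormedAddCommGroup E] [InnerProductSpace ℝ E]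
    (W : Set E) (D : ℝ) (hDpos : 0 < D)
    (hD : ∀ u ∈ W, ∀ v ∈ W, ‖u - v‖ ≤ D)
    (P : E → E) (hPmem : ∀ x : E, P x ∈ W)
    (hPnonexp : ∀ x : E, ∀ y ∈ W, ‖P x - y‖ ≤ ‖x - y‖)
    (f : E → ℝ) (T : ℕ) (hT : 1 ≤ T)
    (ε G : ℝ) (hGε : 0 < G + ε)
    (η : ℝ) (hη : η = D / ((G + ε) * Real.sqrt T))
    (w g e : ℕ → E) (hw0 : w 0 ∈ W)
    (hrec : ∀ t < T, w (t + 1) = P (w t - η • (g t + e t)))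
    (hsub : ∀ t < T, ∀ y ∈ W, f y ≥ f (w t) + ⟪g t, y - w t⟫)
    (hgB : ∀ t < T, ‖g t‖ ≤ G)
    (heB : ∀ t < T, ‖e t‖ ≤ ε) :
    ∀ wstar ∈ W,
      (Finset.range T).inf' (Finset.nonempty_range_iff.mpr (by omega))
          (fun t => f (w t) - f wstar)
        ≤ D * (G + ε) / Real.sqrt T + ε * D := by
  intro wstar hwstar
  have hmem : ∀ t ≤ T, w t ∈ W := by
    rintro (_ | t) ht
    · exact hw0
    · rw [hrec t ht]
      exact hPmem _
  have hsqrtT : 0 < Real.sqrt T := Real.sqrt_pos.mpr (by exact_mod_cast hT)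
  have hηpos : 0 < η := by rw [hη]; positivity
  calc (Finset.range T).inf' _ (fun t => f (w t) - f wstar)
      ≤ ‖w 0 - wstar‖ ^ 2 / (2 * η) / T + (η * (G + ε) ^ 2 / 2 + ε * D) := by
        refine inf'_range_le_div_add_of_le_sub_succ
          (a := fun t => ‖w t - wstar‖ ^ 2 / (2 * η)) _ (fun t ht => ?_) ?_
        · rw [hrec t ht]
          exact sub_le_of_projected_subgradient_step hPnonexp hηpos hwstar (hsub t ht wstar hwstar) (hgB t ht)
            (heB t ht) (hD _ (hmem t ht.le) _ hwstar)
        · exact div_nonneg (sq_nonneg _) (by linarith)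
    _ ≤ D ^ 2 / (2 * η) / T + (η * (G + ε) ^ 2 / 2 + ε * D) := by
        gcongr
        exact hD _ hw0 _ hwstar
    _ = D * (G + ε) / Real.sqrt T + ε * D := by
        rw [hη]
        field_simp
        rw [Real.sq_sqrt (Nat.cast_nonneg T)]
        ring
end

section
/- Let (Ω, ℙ) be a probability space, L : Ω → ℝ an integrable random variable, and α ∈ (0, 1). Define q_α = sInf { z ∈ ℝ : ℙ(L ≤ z) ≥ α } and h_α(z) = z + (1 − α)⁻¹ · E[max(L − z, 0)]. If ℙ(L = q_α) = 0, then h_α(q_α) = (1 − α)⁻¹ · E[L · 1{L ≥ q_α}], i.e. the Rockafellar–Uryasev minimum value equals the conditional expectation of L on the tail event {L ≥ q_α}. -/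
/-!
Right-continuity of the distribution function `F` of `L` gives `F q_α ≥ α`, while every `z < q_α`
has `F z < α`, so `F (q_α-) ≤ α`. Without an atom at `q_α` these meet: `ℙ(L ≥ q_α) = 1 − α`.
Since `(L − q_α)₊ = (L − q_α) · 1{L ≥ q_α}`, the objective at `q_α` is
`q_α + (1 − α)⁻¹ (E[L · 1{L ≥ q_α}] − q_α (1 − α))`, and the `q_α` terms cancel.
-/

open MeasureTheory Set Filter Function

namespace ProbabilityTheory

-- For `α ≤ 0` the set is all of `ℝ` and for `1 < α` it is empty; `sInf` then returns the junk `0`.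
noncomputable def quantile (μ : Measure ℝ) (α : ℝ) : ℝ := sInf {z | α ≤ cdf μ z}

section Quantile

variable {μ : Measure ℝ} {α : ℝ}

lemma le_cdf_quantile (hα : α < 1) : α ≤ cdf μ (quantile μ α) := by
  have hne : {z | α ≤ cdf μ z}.Nonempty :=
    ((tendsto_cdf_atTop μ).eventually (eventually_ge_nhds hα)).exists
  refine ge_of_tendsto (((cdf μ).right_continuous _).tendsto.mono_left
    (nhdsWithin_mono _ Ioi_subset_Ici_self)) ?_
  filter_upwards [self_mem_nhdsWithin] with z hz
  obtain ⟨s, hs, hsz⟩ := exists_lt_of_csInf_lt hne hz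
  exact hs.trans (monotone_cdf μ hsz.le)

lemma leftLim_cdf_quantile_le (hα : 0 < α) : leftLim (cdf μ) (quantile μ α) ≤ α := by
  obtain ⟨a, ha⟩ := eventually_atBot.1 ((tendsto_cdf_atBot μ).eventually (eventually_lt_nhds hα))
  have hbdd : BddBelow {z | α ≤ cdf μ z} :=
    ⟨a, fun z hz => le_of_not_gt fun hza => (ha z hza.le).not_ge hz⟩
  refine le_of_tendsto ((monotone_cdf μ).tendsto_leftLim _) ?_
  filter_upwards [self_mem_nhdsWithin] with z hz
  exact (not_le.1 (notMem_of_lt_csInf (s := {z | α ≤ cdf μ z}) hz hbdd)).le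

lemma cdf_quantile_of_measure_singleton_eq_zero [IsProbabilityMeasure μ] (hα : α ∈ Ioo 0 1)
    (hatom : μ {quantile μ α} = 0) : cdf μ (quantile μ α) = α := by
  have hjump := (cdf μ).measure_singleton (quantile μ α)
  rw [measure_cdf, hatom, eq_comm, ENNReal.ofReal_eq_zero] at hjump
  linarith [le_cdf_quantile (μ := μ) hα.2, leftLim_cdf_quantile_le (μ := μ) hα.1]

end Quantile

section RandomVariable

variable {Ω : Type*} [MeasurableSpace Ω] {P : Measure Ω} {L : Ω → ℝ}

lemma cdf_map_eq_measureReal [IsProbabilityMeasure P] (hL : AEMeasurable L P) (z : ℝ) :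
    cdf (P.map L) z = P.real {ω | L ω ≤ z} := by
  have := Measure.isProbabilityMeasure_map hL
  rw [cdf_eq_real, measureReal_def, measureReal_def,
    Measure.map_apply_of_aemeasurable hL measurableSet_Iic]
  rfl

lemma probReal_ge_eq_one_sub_probReal_le [IsProbabilityMeasure P] (hL : AEMeasurable L P)
    {q : ℝ} (hatom : P {ω | L ω = q} = 0) :
    P.real {ω | q ≤ L ω} = 1 - P.real {ω | L ω ≤ q} := by
  have hcompl : {ω | q ≤ L ω} = {ω | L ω < q}ᶜ := by ext; simp
  have hlt : P {ω | L ω < q} = P {ω | L ω ≤ q} := by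
    rw [← measure_sdiff_null (s := {ω | L ω ≤ q}) hatom]
    congr 1
    ext
    exact lt_iff_le_and_ne (a := L _)
  have hmeas : NullMeasurableSet {ω | L ω < q} P :=
    hL.nullMeasurableSet_preimage measurableSet_Iio
  rw [hcompl, probReal_compl_eq_one_sub₀ hmeas, measureReal_def, measureReal_def, hlt]

lemma integral_max_sub_zero_eq [IsFiniteMeasure P] (hL : Integrable L P) (q : ℝ) :
    ∫ ω, max (L ω - q) 0 ∂P = ∫ ω in {ω | q ≤ L ω}, L ω ∂P - q * P.real {ω | q ≤ L ω} := by
  have hpos : (fun ω => max (L ω - q) 0) = {ω | q ≤ L ω}.indicator (fun ω => L ω - q) := by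
    ext ω
    by_cases hω : q ≤ L ω
    · simp [hω]
    · simp [hω, (not_le.1 hω).le]
  have hmeas : NullMeasurableSet {ω | q ≤ L ω} P :=
    hL.aemeasurable.nullMeasurableSet_preimage measurableSet_Ici
  rw [hpos, integral_indicator₀ hmeas,
    integral_sub hL.restrict (integrable_const q), setIntegral_const, smul_eq_mul, mul_comm]

end RandomVariable

end ProbabilityTheory

open ProbabilityTheory

theorem rockafellar_uryasev_min_eq_tail_expectation_general
    {Ω : Type*} [MeasurableSpace Ω] (P : Measure Ω) [IsProbabilityMeasure P]
    (L : Ω → ℝ) (hLint : Integrable L P)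
    (α : ℝ) (hα : α ∈ Set.Ioo (0 : ℝ) 1)
    (q : ℝ) (hq : q = sInf {z : ℝ | α ≤ (P {ω | L ω ≤ z}).toReal})
    (h : ℝ → ℝ)
    (hh : ∀ z : ℝ, h z = z + (1 - α)⁻¹ * ∫ ω, max (L ω - z) 0 ∂P)
    (hatom : P {ω | L ω = q} = 0) :
    h q = (1 - α)⁻¹ * ∫ ω in {ω | q ≤ L ω}, L ω ∂P := by
  have hL := hLint.aemeasurable
  have hquantile : q = quantile (P.map L) α := by
    simp_rw [hq, quantile, cdf_map_eq_measureReal hL, measureReal_def]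
  have hatom_map : P.map L {quantile (P.map L) α} = 0 := by
    rwa [← hquantile, Measure.map_apply_of_aemeasurable hL (measurableSet_singleton q)]
  have := Measure.isProbabilityMeasure_map hL
  have hcdf : P.real {ω | L ω ≤ q} = α := by
    rw [← cdf_map_eq_measureReal hL, hquantile]
    exact cdf_quantile_of_measure_singleton_eq_zero hα hatom_map
  have htail : P.real {ω | q ≤ L ω} = 1 - α := by
    rw [probReal_ge_eq_one_sub_probReal_le hL hatom, hcdf]
  have hα1 : 1 - α ≠ 0 := by linarith [hα.2]
  rw [hh, integral_max_sub_zero_eq hLint, htail]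
  field_simp
  ring

/-- If `L` has no atom at its α-quantile `q_α = inf{z : ℙ(L ≤ z) ≥ α}`, then
the Rockafellar–Uryasev minimum value equals the tail conditional expectation:
`h_α(q_α) = (1 − α)⁻¹ · E[L · 1{L ≥ q_α}]`. -/
theorem rockafellar_uryasev_min_eq_tail_expectation
    {Ω : Type*} [MeasurableSpace Ω] (P : Measure Ω) [IsProbabilityMeasure P]
    (L : Ω → ℝ) (hL : Measurable L) (hLint : Integrable L P)
    (α : ℝ) (hα : α ∈ Set.Ioo (0 : ℝ) 1)
    (q : ℝ) (hq : q = sInf {z : ℝ | α ≤ (P {ω | L ω ≤ z}).toReal})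
    (h : ℝ → ℝ)
    (hh : ∀ z : ℝ, h z = z + (1 - α)⁻¹ * ∫ ω, max (L ω - z) 0 ∂P)
    (hatom : P {ω | L ω = q} = 0) :
    h q = (1 - α)⁻¹ * ∫ ω in {ω | q ≤ L ω}, L ω ∂P :=
  rockafellar_uryasev_min_eq_tail_expectation_general P L hLint α hα q hq h hh hatom
end
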